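/- Let E be a real inner product space and f : E → ℝ a differentiable function that is l-smooth and μ-strongly convex with 0 < μ ≤ l, and let θ* be a global minimizer of f. Let {θ_k}_{k=0}^{M} be the gradient descent sequence θ_{k+1} = θ_k − (1/l)·∇f(θ_k) started from any θ_0 ∈ E. Then f(θ_M) − f(θ*) ≤ (1 − μ/l)^M · (f(θ_0) − f(θ*)). -/

import Mathlib

/-!
Smoothness makes each gradient step decrease `f` by at least `‖∇f(θ)‖² / (2l)`, while strong
convexity gives the Polyak–Łojasiewicz inequality `2μ (f(θ) − f(θ*)) ≤ ‖∇f(θ)‖²`. Together they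
contract the gap `f(θ_k) − f(θ*)` by the factor `1 − μ/l` at every step.
-/

open RealInnerProductSpace

section GradientDescent

variable {E : Type*} [NormedAddCommGroup E] [InnerProductSpace ℝ E] {f : E → ℝ} {x y g : E}
  {l μ : ℝ}

theorem le_sub_norm_sq_of_gradient_step (hl : l ≠ 0)
    (hsmooth : ∀ y, f y ≤ f x + ⟪g, y - x⟫ + l / 2 * ‖y - x‖ ^ 2) :
    f (x - (1 / l) • g) ≤ f x - ‖g‖ ^ 2 / (2 * l) := by
  have hstep := hsmooth (x - (1 / l) • g)
  rw [sub_sub_cancel_left, inner_neg_right, real_inner_smul_right, real_inner_self_eq_norm_sq,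
    norm_neg, norm_smul, Real.norm_eq_abs, mul_pow, sq_abs] at hstep
  convert hstep using 1
  field_simp
  ring

theorem polyak_lojasiewicz_of_lower_quadratic (hμ : 0 ≤ μ)
    (hstrong : f y ≥ f x + ⟪g, y - x⟫ + μ / 2 * ‖y - x‖ ^ 2) :
    2 * μ * (f x - f y) ≤ ‖g‖ ^ 2 := by
  have hsq : 0 ≤ ‖μ • (y - x) + g‖ ^ 2 := sq_nonneg _
  rw [norm_add_sq_real, norm_smul, real_inner_smul_left, real_inner_comm, Real.norm_eq_abs,
    mul_pow, sq_abs] at hsq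
  nlinarith [mul_le_mul_of_nonneg_left hstrong (by positivity : 0 ≤ 2 * μ)]

theorem gradient_step_gap_le (hl : 0 < l) (hμ : 0 ≤ μ)
    (hsmooth : ∀ y, f y ≤ f x + ⟪g, y - x⟫ + l / 2 * ‖y - x‖ ^ 2)
    (hstrong : f y ≥ f x + ⟪g, y - x⟫ + μ / 2 * ‖y - x‖ ^ 2) :
    f (x - (1 / l) • g) - f y ≤ (1 - μ / l) * (f x - f y) := by
  have hdescent := le_sub_norm_sq_of_gradient_step hl.ne' hsmooth
  have hpl := polyak_lojasiewicz_of_lower_quadratic hμ hstrong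
  have hgap : μ / l * (f x - f y) ≤ ‖g‖ ^ 2 / (2 * l) := by
    rw [div_mul_eq_mul_div, div_le_div_iff₀ hl (by positivity)]
    nlinarith
  linarith

end GradientDescent

theorem stmt_8_general {E : Type*} [NormedAddCommGroup E] [InnerProductSpace ℝ E]
    (f : E → ℝ) (f' : E → E)
    (l μ : ℝ) (hμ : 0 < μ) (hμl : μ ≤ l)
    (hsmooth : ∀ x y : E,
      f y ≤ f x + (inner ℝ (f' x) (y - x) : ℝ) + (l / 2) * ‖y - x‖ ^ 2)
    (hstrong : ∀ x y : E,
      f y ≥ f x + (inner ℝ (f' x) (y - x) : ℝ) + (μ / 2) * ‖y - x‖ ^ 2)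
    (θstar : E)
    (θ : ℕ → E) (hθ : ∀ k, θ (k + 1) = θ k - (1 / l) • f' (θ k))
    (M : ℕ) :
    f (θ M) - f θstar ≤ (1 - μ / l) ^ M * (f (θ 0) - f θstar) := by
  have hl : 0 < l := hμ.trans_le hμl
  have hrate : 0 ≤ 1 - μ / l := sub_nonneg.mpr (div_le_one_of_le₀ hμl hl.le)
  refine le_geom (u := fun k ↦ f (θ k) - f θstar) hrate M fun k _ ↦ ?_
  rw [hθ k]
  exact gradient_step_gap_le hl hμ.le (hsmooth (θ k)) (hstrong (θ k) θstar)

/-- Linear convergence of function values for gradient descent with step size `1/l` on a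
differentiable, `l`-smooth and `μ`-strongly convex function with global minimizer `θ*`:
`f(θ_M) − f(θ*) ≤ (1 − μ/l)^M · (f(θ_0) − f(θ*))`. -/
theorem stmt_8 {E : Type*} [NormedAddCommGroup E] [InnerProductSpace ℝ E]
    (f : E → ℝ) (f' : E → E)
    (hf : ∀ x, HasFDerivAt f (InnerProductSpace.toDualMap ℝ E (f' x)) x)
    (l μ : ℝ) (hμ : 0 < μ) (hμl : μ ≤ l)
    (hsmooth : ∀ x y : E,
      f y ≤ f x + (inner ℝ (f' x) (y - x) : ℝ) + (l / 2) * ‖y - x‖ ^ 2)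
    (hstrong : ∀ x y : E,
      f y ≥ f x + (inner ℝ (f' x) (y - x) : ℝ) + (μ / 2) * ‖y - x‖ ^ 2)
    (θstar : E) (hmin : ∀ x, f θstar ≤ f x)
    (θ : ℕ → E) (hθ : ∀ k, θ (k + 1) = θ k - (1 / l) • f' (θ k))
    (M : ℕ) :
    f (θ M) - f θstar ≤ (1 - μ / l) ^ M * (f (θ 0) - f θstar) :=
  stmt_8_general f f' l μ hμ hμl hsmooth hstrong θstar θ hθ M
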